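/- arXiv:1007.1229 — 3 statements merged into one kernel-verified Lean document; each statement's English description precedes it below -/
import Mathlib

section
/- Let f:D→ℝ be strongly tree-submodular and x∈D. If f(x) = min{ f(y) : y ∈ INWARD(x) } and f(x) = min{ f(y) : y ∈ OUTWARD(x) }, then x is a global minimizer of f, i.e. f(x) ≤ f(y) for all y∈D. -/
/-- A finite rooted tree on vertex set `V`, encoded by its root, the parent function
(with `parent root = root`) and the depth function (distance to the root). -/
structure RTree (V : Type*) where
  root : V
  parent : V → V
  depth : V → ℕ
  parent_root : parent root = root
  depth_root : depth root = 0
  depth_parent : ∀ v, v ≠ root → depth (parent v) + 1 = depth v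

namespace RTree

variable {V : Type*} (T : RTree V)

/-- `a ⪯ b` : `a` is an ancestor of `b`, i.e. `a` lies on the path from `b` to the root. -/
def anc (a b : V) : Prop := ∃ k : ℕ, T.parent^[k] b = a

theorem iterate_depth_aux : ∀ (n : ℕ) (v : V), T.depth v = n → T.parent^[n] v = T.root := by
  intro n
  induction n with
  | zero =>
    intro v hn
    by_cases hv : v = T.root
    · simp [hv]
    · have := T.depth_parent v hv; omega
  | succ n ih =>
    intro v hn
    have hv : v ≠ T.root := by
      intro h; rw [h, T.depth_root] at hn; omega
    have h := T.depth_parent v hv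
    rw [Function.iterate_succ_apply]
    exact ih (T.parent v) (by omega)

theorem iterate_depth (v : V) : T.parent^[T.depth v] v = T.root :=
  T.iterate_depth_aux (T.depth v) v rfl

theorem anc_root (b : V) : T.anc T.root b := ⟨T.depth b, T.iterate_depth b⟩

theorem exists_lcaIndex (a b : V) : ∃ k : ℕ, T.anc (T.parent^[k] a) b :=
  ⟨T.depth a, by rw [T.iterate_depth a]; exact T.anc_root b⟩

open Classical in
/-- The highest common ancestor of `a` and `b` : the deepest vertex that is an ancestor
of both `a` and `b` (i.e. the unique vertex of the path `P[a→b]` that is an ancestor of both). -/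
noncomputable def lca (a b : V) : V := T.parent^[Nat.find (T.exists_lcaIndex a b)] a

/-- `ρ(a,b)` : the number of edges of the unique path `P[a→b]` from `a` to `b`. -/
noncomputable def dist (a b : V) : ℕ :=
  (T.depth a - T.depth (T.lca a b)) + (T.depth b - T.depth (T.lca a b))

open Classical in
/-- `P[a→b, d]` : the `d`-th vertex of the path from `a` to `b` (first the ascending part
from `a` to the highest common ancestor, then the descending part towards `b`);
by convention it equals `b` for `d > ρ(a,b)`. -/
noncomputable def pathVertex (a b : V) (d : ℕ) : V :=
  if T.dist a b ≤ d then b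
  else if d ≤ T.depth a - T.depth (T.lca a b) then T.parent^[d] a
  else T.parent^[T.dist a b - d] b

open Classical in
/-- `a ⊓ b` : the member of `{P[a→b,⌊ρ(a,b)/2⌋], P[a→b,⌈ρ(a,b)/2⌉]}` that is an
ancestor of the other one. -/
noncomputable def cap (a b : V) : V :=
  if T.anc (T.pathVertex a b (T.dist a b / 2)) (T.pathVertex a b ((T.dist a b + 1) / 2))
  then T.pathVertex a b (T.dist a b / 2)
  else T.pathVertex a b ((T.dist a b + 1) / 2)

open Classical in
/-- `a ⊔ b` : the member of `{P[a→b,⌊ρ(a,b)/2⌋], P[a→b,⌈ρ(a,b)/2⌉]}` that is a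
descendant of the other one. -/
noncomputable def cup (a b : V) : V :=
  if T.anc (T.pathVertex a b (T.dist a b / 2)) (T.pathVertex a b ((T.dist a b + 1) / 2))
  then T.pathVertex a b ((T.dist a b + 1) / 2)
  else T.pathVertex a b (T.dist a b / 2)

/-- `a ∧ b` : the highest common ancestor of `a` and `b`. -/
noncomputable def meet (a b : V) : V := T.lca a b

/-- `a ∨ b` : the unique vertex of `P[a→b]` with `ρ(a, a∨b) = ρ(a∧b, b)`. -/
noncomputable def join (a b : V) : V :=
  T.pathVertex a b (T.depth b - T.depth (T.lca a b))

/-- `a ↑^d b = P[a→b,d] ∧ b`. -/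
noncomputable def up (d : ℕ) (a b : V) : V := T.meet (T.pathVertex a b d) b

/-- `a ↓_d b = P[a→b, ρ(a ↑^d b, b)]`. -/
noncomputable def down (d : ℕ) (a b : V) : V :=
  T.pathVertex a b (T.dist (T.up d a b) b)

end RTree

section Product

variable {ι : Type*} {V : ι → Type*}

/-- `f` is strongly tree-submodular w.r.t. the trees `T i`:
`f(x) + f(y) ≥ f(x ⊓ y) + f(x ⊔ y)`, the operations acting componentwise. -/
def StronglyTreeSubmodular (T : ∀ i, RTree (V i)) (f : (∀ i, V i) → ℝ) : Prop :=
  ∀ x y : ∀ i, V i,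
    f (fun i => (T i).cap (x i) (y i)) + f (fun i => (T i).cup (x i) (y i)) ≤ f x + f y

/-- `INWARD(x) = { y ∈ NEIB(x) : y ⪯ x }`, where `NEIB(x) = {y : max_i ρ(x_i,y_i) ≤ 1}`. -/
def inward (T : ∀ i, RTree (V i)) (x : ∀ i, V i) : Set (∀ i, V i) :=
  {y | (∀ i, (T i).dist (x i) (y i) ≤ 1) ∧ ∀ i, (T i).anc (y i) (x i)}

/-- `OUTWARD(x) = { y ∈ NEIB(x) : x ⪯ y }`. -/
def outward (T : ∀ i, RTree (V i)) (x : ∀ i, V i) : Set (∀ i, V i) :=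
  {y | (∀ i, (T i).dist (x i) (y i) ≤ 1) ∧ ∀ i, (T i).anc (x i) (y i)}

end Product

namespace RTree

variable {V : Type*} (T : RTree V)

theorem iterate_root' (k : ℕ) : T.parent^[k] T.root = T.root :=
  Function.iterate_fixed T.parent_root k

theorem depth_iterate (k : ℕ) (v : V) : T.depth (T.parent^[k] v) = T.depth v - k := by
  induction k with
  | zero => simp
  | succ k ih =>
    rw [Function.iterate_succ_apply']
    by_cases h : T.parent^[k] v = T.root
    · have h0 : T.depth (T.parent^[k] v) = 0 := by rw [h, T.depth_root]
      rw [h, T.parent_root, T.depth_root]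
      omega
    · have := T.depth_parent _ h
      omega

theorem eq_root_of_depth_eq_zero {v : V} (h : T.depth v = 0) : v = T.root := by
  by_contra hv
  have := T.depth_parent v hv
  omega

theorem anc_refl (a : V) : T.anc a a := ⟨0, rfl⟩

theorem anc_trans {a b c : V} (h1 : T.anc a b) (h2 : T.anc b c) : T.anc a c := by
  obtain ⟨j, hj⟩ := h1; obtain ⟨k, hk⟩ := h2
  exact ⟨j + k, by rw [Function.iterate_add_apply, hk, hj]⟩

theorem depth_le_of_anc {a b : V} (h : T.anc a b) : T.depth a ≤ T.depth b := by
  obtain ⟨k, hk⟩ := h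
  have h2 := T.depth_iterate k b
  rw [hk] at h2
  omega

theorem eq_of_anc_depth {a b : V} (h : T.anc a b) (hd : T.depth a = T.depth b) : a = b := by
  obtain ⟨k, hk⟩ := h
  have hL := T.depth_iterate k b
  rw [hk] at hL
  rcases Nat.eq_zero_or_pos k with rfl | hk0
  · exact hk.symm
  · rcases Nat.eq_zero_or_pos (T.depth b) with h0 | h1
    · have hb := T.eq_root_of_depth_eq_zero h0
      rw [hb] at hk
      rw [T.iterate_root'] at hk
      exact hk.symm.trans hb.symm
    · omega

theorem anc_antisymm {a b : V} (h1 : T.anc a b) (h2 : T.anc b a) : a = b :=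
  T.eq_of_anc_depth h1 (le_antisymm (T.depth_le_of_anc h1) (T.depth_le_of_anc h2))

theorem anc_of_anc_of_depth_le {u v b : V} (hu : T.anc u b) (hv : T.anc v b)
    (hd : T.depth u ≤ T.depth v) : T.anc u v := by
  obtain ⟨j, hj⟩ := hu; obtain ⟨k, hk⟩ := hv
  rcases le_or_gt k j with h | h
  · exact ⟨j - k, by rw [← hk, ← Function.iterate_add_apply, Nat.sub_add_cancel h, hj]⟩
  · have hvu : T.anc v u :=
      ⟨k - j, by rw [← hj, ← Function.iterate_add_apply, Nat.sub_add_cancel h.le, hk]⟩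
    have heq := T.eq_of_anc_depth hvu (le_antisymm (T.depth_le_of_anc hvu) hd)
    rw [heq]
    exact T.anc_refl u

theorem lca_anc_left (a b : V) : T.anc (T.lca a b) a := by
  classical
  unfold lca
  exact ⟨_, rfl⟩

theorem lca_anc_right (a b : V) : T.anc (T.lca a b) b := by
  classical
  unfold lca
  exact Nat.find_spec (T.exists_lcaIndex a b)

theorem anc_lca {c a b : V} (h1 : T.anc c a) (h2 : T.anc c b) : T.anc c (T.lca a b) := by
  classical
  obtain ⟨j, hj⟩ := h1
  have hjmem : T.anc (T.parent^[j] a) b := by rw [hj]; exact h2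
  have hk : Nat.find (T.exists_lcaIndex a b) ≤ j := Nat.find_min' _ hjmem
  refine ⟨j - Nat.find (T.exists_lcaIndex a b), ?_⟩
  unfold lca
  rw [← Function.iterate_add_apply, Nat.sub_add_cancel hk, hj]

theorem lca_eq_of_anc {a c : V} (h : T.anc c a) : T.lca a c = c :=
  T.anc_antisymm (T.lca_anc_right a c) (T.anc_lca h (T.anc_refl c))

theorem dist_self (a : V) : T.dist a a = 0 := by
  unfold dist
  rw [T.lca_eq_of_anc (T.anc_refl a)]
  omega

theorem eq_of_dist_eq_zero {a b : V} (h : T.dist a b = 0) : a = b := by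
  have h1 := T.depth_le_of_anc (T.lca_anc_left a b)
  have h2 := T.depth_le_of_anc (T.lca_anc_right a b)
  unfold dist at h
  have ha : T.lca a b = a := T.eq_of_anc_depth (T.lca_anc_left a b) (by omega)
  have hb : T.lca a b = b := T.eq_of_anc_depth (T.lca_anc_right a b) (by omega)
  rw [← ha, hb]

theorem dist_iterate_le (a : V) (d : ℕ) : T.dist a (T.parent^[d] a) ≤ d := by
  have hlca : T.lca a (T.parent^[d] a) = T.parent^[d] a := T.lca_eq_of_anc ⟨d, rfl⟩
  have hdep := T.depth_iterate d a
  unfold dist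
  rw [hlca, hdep]
  omega

theorem dist_iterate_right (a b : V) (e : ℕ)
    (he : e ≤ T.depth b - T.depth (T.lca a b)) :
    T.dist a (T.parent^[e] b)
      = (T.depth a - T.depth (T.lca a b)) + (T.depth b - T.depth (T.lca a b) - e) := by
  have hca := T.depth_le_of_anc (T.lca_anc_left a b)
  have hcb := T.depth_le_of_anc (T.lca_anc_right a b)
  have hPb : T.anc (T.parent^[e] b) b := ⟨e, rfl⟩
  have hdP := T.depth_iterate e b
  have hcP : T.anc (T.lca a b) (T.parent^[e] b) :=
    T.anc_of_anc_of_depth_le (T.lca_anc_right a b) hPb (by omega)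
  have h5 : T.anc (T.lca a b) (T.lca a (T.parent^[e] b)) :=
    T.anc_lca (T.lca_anc_left a b) hcP
  have h6 : T.anc (T.lca a (T.parent^[e] b)) b :=
    T.anc_trans (T.lca_anc_right a (T.parent^[e] b)) hPb
  have h7 : T.anc (T.lca a (T.parent^[e] b)) (T.lca a b) :=
    T.anc_lca (T.lca_anc_left a (T.parent^[e] b)) h6
  have h8 : T.lca a (T.parent^[e] b) = T.lca a b := T.anc_antisymm h7 h5
  unfold dist
  rw [h8, hdP]
  omega

theorem dist_pathVertex_le (a b : V) (d : ℕ) : T.dist a (T.pathVertex a b d) ≤ d := by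
  have hca := T.depth_le_of_anc (T.lca_anc_left a b)
  have hcb := T.depth_le_of_anc (T.lca_anc_right a b)
  have hdist : T.dist a b
      = (T.depth a - T.depth (T.lca a b)) + (T.depth b - T.depth (T.lca a b)) := rfl
  unfold pathVertex
  split_ifs with h1 h2
  · exact h1
  · exact T.dist_iterate_le a d
  · have hkey := T.dist_iterate_right a b (T.dist a b - d) (by omega)
    omega

theorem dist_cap_le (a b : V) : T.dist a (T.cap a b) ≤ (T.dist a b + 1) / 2 := by
  unfold cap
  split_ifs
  · exact le_trans (T.dist_pathVertex_le a b _) (by omega)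
  · exact T.dist_pathVertex_le a b _

theorem dist_cup_le (a b : V) : T.dist a (T.cup a b) ≤ (T.dist a b + 1) / 2 := by
  unfold cup
  split_ifs
  · exact T.dist_pathVertex_le a b _
  · exact le_trans (T.dist_pathVertex_le a b _) (by omega)

theorem pathVertex_self (a : V) (d : ℕ) : T.pathVertex a a d = a := by
  unfold pathVertex
  rw [T.dist_self]
  simp

theorem cap_self (a : V) : T.cap a a = a := by
  unfold cap
  rw [T.pathVertex_self, T.pathVertex_self]
  split_ifs <;> rfl

theorem cup_self (a : V) : T.cup a a = a := by
  unfold cup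
  rw [T.pathVertex_self, T.pathVertex_self]
  split_ifs <;> rfl

theorem pathVertex_zero_of_dist_one {a b : V} (h : T.dist a b = 1) :
    T.pathVertex a b 0 = a := by
  unfold pathVertex
  rw [h]
  simp

theorem pathVertex_one_of_dist_one {a b : V} (h : T.dist a b = 1) :
    T.pathVertex a b 1 = b := by
  unfold pathVertex
  rw [h]
  simp

theorem anc_total_of_dist_le_one {a b : V} (h : T.dist a b ≤ 1) :
    T.anc a b ∨ T.anc b a := by
  have hca := T.depth_le_of_anc (T.lca_anc_left a b)
  have hcb := T.depth_le_of_anc (T.lca_anc_right a b)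
  have hdist : T.dist a b
      = (T.depth a - T.depth (T.lca a b)) + (T.depth b - T.depth (T.lca a b)) := rfl
  by_cases hA : T.depth (T.lca a b) = T.depth a
  · left
    have heq : T.lca a b = a := T.eq_of_anc_depth (T.lca_anc_left a b) hA
    rw [← heq]
    exact T.lca_anc_right a b
  · right
    have hB : T.depth (T.lca a b) = T.depth b := by omega
    have heq : T.lca a b = b := T.eq_of_anc_depth (T.lca_anc_right a b) hB
    rw [← heq]
    exact T.lca_anc_left a b

theorem anc_cap_of_dist_le_one {a b : V} (h : T.dist a b ≤ 1) : T.anc (T.cap a b) a := by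
  rcases Nat.lt_or_ge (T.dist a b) 1 with h0 | h1
  · have h0' : T.dist a b = 0 := by omega
    have hab := T.eq_of_dist_eq_zero h0'
    subst hab
    rw [T.cap_self]
    exact T.anc_refl a
  · have h1' : T.dist a b = 1 := le_antisymm h h1
    unfold cap
    rw [h1']
    simp only [show (1:ℕ)/2 = 0 from rfl, show ((1:ℕ)+1)/2 = 1 from rfl]
    rw [T.pathVertex_zero_of_dist_one h1', T.pathVertex_one_of_dist_one h1']
    split_ifs with hab
    · exact T.anc_refl a
    · rcases T.anc_total_of_dist_le_one h with h' | h'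
      · exact absurd h' hab
      · exact h'

theorem anc_cup_of_dist_le_one {a b : V} (h : T.dist a b ≤ 1) : T.anc a (T.cup a b) := by
  rcases Nat.lt_or_ge (T.dist a b) 1 with h0 | h1
  · have h0' : T.dist a b = 0 := by omega
    have hab := T.eq_of_dist_eq_zero h0'
    subst hab
    rw [T.cup_self]
    exact T.anc_refl a
  · have h1' : T.dist a b = 1 := le_antisymm h h1
    unfold cup
    rw [h1']
    simp only [show (1:ℕ)/2 = 0 from rfl, show ((1:ℕ)+1)/2 = 1 from rfl]
    rw [T.pathVertex_zero_of_dist_one h1', T.pathVertex_one_of_dist_one h1']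
    split_ifs with hab
    · exact hab
    · exact T.anc_refl a

end RTree

/-- If a strongly tree-submodular function `f` attains at `x` the minimum
of `f` over `INWARD(x)` and over `OUTWARD(x)`, then `x` is a global minimizer of `f`. -/
theorem local_optimality_implies_global {ι : Type*} [Fintype ι] {V : ι → Type*}
    [∀ i, Fintype (V i)] (T : ∀ i, RTree (V i)) (f : (∀ i, V i) → ℝ)
    (hf : StronglyTreeSubmodular T f) (x : ∀ i, V i)
    (hin : ∀ y ∈ inward T x, f x ≤ f y) (hout : ∀ y ∈ outward T x, f x ≤ f y) :
    ∀ y : ∀ i, V i, f x ≤ f y := by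
  classical
  have key : ∀ d : ℕ, ∀ y : ∀ i, V i, (∀ i, (T i).dist (x i) (y i) ≤ d) → f x ≤ f y := by
    intro d
    induction d using Nat.strong_induction_on with
    | _ d ih =>
      intro y hy
      rcases Nat.eq_zero_or_pos d with rfl | hd
      · have hyx : y = x := by
          funext i
          exact ((T i).eq_of_dist_eq_zero (Nat.le_zero.mp (hy i))).symm
        rw [hyx]
      · have hsub := hf x y
        set m1 := fun i => (T i).cap (x i) (y i) with hm1
        set m2 := fun i => (T i).cup (x i) (y i) with hm2
        have hb1 : ∀ i, (T i).dist (x i) (m1 i) ≤ (d + 1) / 2 := by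
          intro i
          have h1 := (T i).dist_cap_le (x i) (y i)
          have h2 := hy i
          simp only [hm1]
          omega
        have hb2 : ∀ i, (T i).dist (x i) (m2 i) ≤ (d + 1) / 2 := by
          intro i
          have h1 := (T i).dist_cup_le (x i) (y i)
          have h2 := hy i
          simp only [hm2]
          omega
        rcases Nat.lt_or_ge d 2 with hd2 | hd2
        · have h1 : f x ≤ f m1 :=
            hin m1 ⟨fun i => by have := hb1 i; omega,
              fun i => (T i).anc_cap_of_dist_le_one (by have := hy i; omega)⟩
          have h2 : f x ≤ f m2 :=
            hout m2 ⟨fun i => by have := hb2 i; omega,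
              fun i => (T i).anc_cup_of_dist_le_one (by have := hy i; omega)⟩
          linarith
        · have h1 : f x ≤ f m1 := ih ((d + 1) / 2) (by omega) m1 hb1
          have h2 : f x ≤ f m2 := ih ((d + 1) / 2) (by omega) m2 hb2
          linarith
  intro y
  exact key (Finset.univ.sup fun i => (T i).dist (x i) (y i)) y
    (fun i => Finset.le_sup (f := fun i => (T i).dist (x i) (y i)) (Finset.mem_univ i))
end

section
/- If f:D→ℝ satisfies f(x)+f(y) ≥ f(x ↑^d y) + f(x ↓_d y) for all x,y∈D and all integers d≥0, then f is strongly tree-submodular, i.e. f(x)+f(y) ≥ f(x⊓y)+f(x⊔y) for all x,y∈D. -/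
/-!
Applying the hypothesis with `d = 0` replaces `(x, y)` by `(x ∧ y, x ↓_0 y)`: in every coordinate
these two points lie on one root path, at depths whose midpoints are exactly `x ⊓ y` and `x ⊔ y`.
For two comparable points `u ⪯ v`, the pair `(u ↑^d v, u ↓_d v)` moves `u` down and `v` up by `d`
steps (clamped at each other), so it keeps the midpoints. If all coordinate gaps are at most `M`,
a move with `d = ⌈M/2⌉` followed by a move with `d = 0`, which reorders the coordinates, leaves
gaps at most `⌈M/2⌉`; iterating until all gaps are at most one reaches `(x ⊓ y, x ⊔ y)`.
-/

namespace RTree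

variable {V : Type*} (T : RTree V)

theorem iterate_parent_root (j : ℕ) : T.parent^[j] T.root = T.root :=
  Function.iterate_fixed T.parent_root j

theorem depth_parent_eq_sub (v : V) : T.depth (T.parent v) = T.depth v - 1 := by
  by_cases hv : v = T.root
  · rw [hv, T.parent_root, T.depth_root]
  · have := T.depth_parent v hv
    omega

theorem depth_iterate_parent (j : ℕ) (v : V) : T.depth (T.parent^[j] v) = T.depth v - j := by
  induction j with
  | zero => rfl
  | succ j ih => rw [Function.iterate_succ_apply', depth_parent_eq_sub, ih, Nat.sub_sub]

theorem iterate_depth_sub_of_anc {a b : V} (h : T.anc a b) :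
    T.parent^[T.depth b - T.depth a] b = a := by
  obtain ⟨k, rfl⟩ := h
  rw [depth_iterate_parent]
  rcases le_or_gt k (T.depth b) with hk | hk
  · rw [Nat.sub_sub_self hk]
  · have hroot : T.parent^[k] b = T.root := by
      rw [← Nat.sub_add_cancel hk.le, Function.iterate_add_apply, T.iterate_depth,
        iterate_parent_root]
    rw [Nat.sub_eq_zero_of_le hk.le, Nat.sub_zero, T.iterate_depth, hroot]

theorem anc_iterate_of_le {v : V} {i j : ℕ} (h : i ≤ j) :
    T.anc (T.parent^[j] v) (T.parent^[i] v) :=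
  ⟨j - i, by rw [← Function.iterate_add_apply, Nat.sub_add_cancel h]⟩

theorem le_of_anc_iterate {v : V} {i j : ℕ} (hi : i ≤ T.depth v) (hj : j ≤ T.depth v)
    (h : T.anc (T.parent^[j] v) (T.parent^[i] v)) : i ≤ j := by
  obtain ⟨k, hk⟩ := h
  have := congrArg T.depth hk
  rw [← Function.iterate_add_apply, depth_iterate_parent, depth_iterate_parent] at this
  omega

open Classical in
theorem lca_eq_iterate (a b : V) : T.lca a b = T.parent^[Nat.find (T.exists_lcaIndex a b)] a :=
  rfl

theorem lca_eq_left_of_anc {a b : V} (h : T.anc a b) : T.lca a b = a := by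
  classical
  have hzero : Nat.find (T.exists_lcaIndex a b) = 0 :=
    Nat.eq_zero_of_le_zero (Nat.find_min' (T.exists_lcaIndex a b) h)
  rw [lca_eq_iterate, hzero, Function.iterate_zero_apply]

theorem lca_iterate_iterate (c : V) {p q : ℕ} (hp : p ≤ T.depth c) (hq : q ≤ T.depth c) :
    T.lca (T.parent^[p] c) (T.parent^[q] c) = T.parent^[max p q] c := by
  classical
  have hex := T.exists_lcaIndex (T.parent^[p] c) (T.parent^[q] c)
  have hmax : T.anc (T.parent^[max p q - p] (T.parent^[p] c)) (T.parent^[q] c) := by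
    rw [← Function.iterate_add_apply, Nat.sub_add_cancel (le_max_left p q)]
    exact T.anc_iterate_of_le (le_max_right p q)
  have hle := Nat.find_min' hex hmax
  have hspec := Nat.find_spec hex
  rw [← Function.iterate_add_apply] at hspec
  have hge := T.le_of_anc_iterate hq (by omega) hspec
  rw [lca_eq_iterate, ← Function.iterate_add_apply]
  congr 1
  omega

theorem dist_iterate_iterate (c : V) {p q : ℕ} (hp : p ≤ T.depth c) (hq : q ≤ T.depth c) :
    T.dist (T.parent^[p] c) (T.parent^[q] c) = max p q - min p q := by
  rw [dist, lca_iterate_iterate T c hp hq, depth_iterate_parent, depth_iterate_parent,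
    depth_iterate_parent]
  omega

theorem dist_lca_left (a b : V) : T.dist (T.lca a b) b = T.depth b - T.depth (T.lca a b) := by
  rw [dist, T.lca_eq_left_of_anc (T.lca_anc_right a b), Nat.sub_self, Nat.zero_add]

theorem pathVertex_of_le {a b : V} {d : ℕ} (hd : d ≤ T.depth a - T.depth (T.lca a b)) :
    T.pathVertex a b d = T.parent^[d] a := by
  unfold pathVertex
  split_ifs with hdist
  · -- `d` covers the whole path, so `b` is the highest common ancestor, `d` steps above `a`
    rw [dist] at hdist
    have hb := T.iterate_depth_sub_of_anc (T.lca_anc_right a b)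
    rw [show T.depth b - T.depth (T.lca a b) = 0 by omega, Function.iterate_zero_apply] at hb
    rw [show d = T.depth a - T.depth (T.lca a b) by omega,
      T.iterate_depth_sub_of_anc (T.lca_anc_left a b)]
    exact hb
  · rfl

/-- The truncated subtraction `dist a b - d` also covers `d` beyond the end of the path. -/
theorem pathVertex_of_ge {a b : V} {d : ℕ} (hd : T.depth a - T.depth (T.lca a b) ≤ d) :
    T.pathVertex a b d = T.parent^[T.dist a b - d] b := by
  unfold pathVertex
  split_ifs with hdist hd'
  · rw [Nat.sub_eq_zero_of_le hdist, Function.iterate_zero_apply]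
  · rw [le_antisymm hd' hd, T.iterate_depth_sub_of_anc (T.lca_anc_left a b),
      show T.dist a b - (T.depth a - T.depth (T.lca a b)) = T.depth b - T.depth (T.lca a b) by
        rw [dist]; omega,
      T.iterate_depth_sub_of_anc (T.lca_anc_right a b)]
  · rfl

theorem pathVertex_zero (a b : V) : T.pathVertex a b 0 = a :=
  T.pathVertex_of_le (Nat.zero_le _)

theorem depth_sub_depth_lca_iterate (c : V) {p q : ℕ} (hp : p ≤ T.depth c)
    (hq : q ≤ T.depth c) :
    T.depth (T.parent^[p] c) - T.depth (T.lca (T.parent^[p] c) (T.parent^[q] c)) = q - p := by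
  rw [lca_iterate_iterate T c hp hq, depth_iterate_parent, depth_iterate_parent]
  omega

theorem pathVertex_iterate_of_ge (c : V) {p q d : ℕ} (hq : q ≤ p) (hp : p ≤ T.depth c) :
    T.pathVertex (T.parent^[p] c) (T.parent^[q] c) d = T.parent^[max (p - d) q] c := by
  have hq' := hq.trans hp
  have hd : T.depth (T.parent^[p] c) - T.depth (T.lca (T.parent^[p] c) (T.parent^[q] c)) ≤ d := by
    rw [depth_sub_depth_lca_iterate T c hp hq']
    omega
  rw [T.pathVertex_of_ge hd, dist_iterate_iterate T c hp hq', ← Function.iterate_add_apply]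
  congr 1
  omega

theorem pathVertex_iterate_of_le (c : V) {p q d : ℕ} (hpq : p ≤ q) (hq : q ≤ T.depth c) :
    T.pathVertex (T.parent^[p] c) (T.parent^[q] c) d = T.parent^[min (p + d) q] c := by
  have hp := hpq.trans hq
  rcases le_or_gt d (q - p) with hd | hd
  · rw [T.pathVertex_of_le (by rwa [depth_sub_depth_lca_iterate T c hp hq]),
      ← Function.iterate_add_apply]
    congr 1
    omega
  · rw [pathVertex, if_pos (by rw [dist_iterate_iterate T c hp hq]; omega)]
    congr 1
    omega

theorem up_iterate_iterate (c : V) {p q : ℕ} (d : ℕ) (hp : p ≤ T.depth c) (hq : q ≤ T.depth c) :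
    T.up d (T.parent^[p] c) (T.parent^[q] c) = T.parent^[max (p - d) q] c := by
  rw [up, meet]
  rcases le_total q p with hqp | hpq
  · rw [pathVertex_iterate_of_ge T c hqp hp, lca_iterate_iterate T c (by omega) hq]
    congr 1
    omega
  · rw [pathVertex_iterate_of_le T c hpq hq, lca_iterate_iterate T c (by omega) hq]
    congr 1
    omega

theorem down_iterate_iterate (c : V) {p q : ℕ} (d : ℕ) (hp : p ≤ T.depth c)
    (hq : q ≤ T.depth c) :
    T.down d (T.parent^[p] c) (T.parent^[q] c) = T.parent^[min (q + d) p] c := by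
  rw [down, up_iterate_iterate T c d hp hq, dist_iterate_iterate T c (by omega) hq]
  rcases le_total q p with hqp | hpq
  · rw [pathVertex_iterate_of_ge T c hqp hp]
    congr 1
    omega
  · rw [pathVertex_iterate_of_le T c hpq hq]
    congr 1
    omega

theorem up_zero (a b : V) : T.up 0 a b = T.lca a b := by
  rw [up, meet, pathVertex_zero]

theorem down_zero (a b : V) :
    T.down 0 a b = T.pathVertex a b (T.depth b - T.depth (T.lca a b)) := by
  rw [down, up_zero, dist_lca_left]

theorem cap_eq_iterate_max {a b c : V} {i j : ℕ} (hi : i ≤ T.depth c) (hj : j ≤ T.depth c)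
    (hfloor : T.pathVertex a b (T.dist a b / 2) = T.parent^[i] c)
    (hceil : T.pathVertex a b ((T.dist a b + 1) / 2) = T.parent^[j] c) :
    T.cap a b = T.parent^[max i j] c := by
  rw [cap, hfloor, hceil]
  split_ifs with h
  · rw [max_eq_left (T.le_of_anc_iterate hj hi h)]
  · rw [max_eq_right (not_le.mp (mt (T.anc_iterate_of_le (v := c)) h)).le]

theorem cup_eq_iterate_min {a b c : V} {i j : ℕ} (hi : i ≤ T.depth c) (hj : j ≤ T.depth c)
    (hfloor : T.pathVertex a b (T.dist a b / 2) = T.parent^[i] c)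
    (hceil : T.pathVertex a b ((T.dist a b + 1) / 2) = T.parent^[j] c) :
    T.cup a b = T.parent^[min i j] c := by
  rw [cup, hfloor, hceil]
  split_ifs with h
  · rw [min_eq_right (T.le_of_anc_iterate hj hi h)]
  · rw [min_eq_left (not_le.mp (mt (T.anc_iterate_of_le (v := c)) h)).le]

/-- `c` is the endpoint of `P[a→b]` farther from `a ∧ b`. -/
theorem exists_chain_up_down_cap_cup (a b : V) : ∃ (c : V) (p q : ℕ), q ≤ p ∧ p ≤ T.depth c ∧
    T.up 0 a b = T.parent^[p] c ∧ T.down 0 a b = T.parent^[q] c ∧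
    T.cap a b = T.parent^[(p + q + 1) / 2] c ∧ T.cup a b = T.parent^[(p + q) / 2] c := by
  have hLa := T.iterate_depth_sub_of_anc (T.lca_anc_left a b)
  have hLb := T.iterate_depth_sub_of_anc (T.lca_anc_right a b)
  set k := T.depth a - T.depth (T.lca a b)
  set m := T.depth b - T.depth (T.lca a b)
  have hdist : T.dist a b = k + m := rfl
  rcases le_total k m with hkm | hmk
  · have hfloor : T.pathVertex a b (T.dist a b / 2) = T.parent^[(m + k + 1) / 2] b := by
      rw [T.pathVertex_of_ge (by omega)]; congr 1; omega
    have hceil : T.pathVertex a b ((T.dist a b + 1) / 2) = T.parent^[(m + k) / 2] b := by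
      rw [T.pathVertex_of_ge (by omega)]; congr 1; omega
    refine ⟨b, m, k, hkm, by omega, by rw [up_zero, hLb], ?_, ?_, ?_⟩
    · rw [down_zero, T.pathVertex_of_ge (by omega)]; congr 1; omega
    · rw [T.cap_eq_iterate_max (by omega) (by omega) hfloor hceil]; congr 1; omega
    · rw [T.cup_eq_iterate_min (by omega) (by omega) hfloor hceil]; congr 1; omega
  · have hfloor : T.pathVertex a b (T.dist a b / 2) = T.parent^[(k + m) / 2] a :=
      T.pathVertex_of_le (by omega)
    have hceil : T.pathVertex a b ((T.dist a b + 1) / 2) = T.parent^[(k + m + 1) / 2] a :=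
      T.pathVertex_of_le (by omega)
    refine ⟨a, k, m, hmk, by omega, by rw [up_zero, hLa], ?_, ?_, ?_⟩
    · rw [down_zero, T.pathVertex_of_le hmk]
    · rw [T.cap_eq_iterate_max (by omega) (by omega) hfloor hceil]; congr 1; omega
    · rw [T.cup_eq_iterate_min (by omega) (by omega) hfloor hceil]; congr 1; omega

end RTree

section Product

variable {ι : Type*} {V : ι → Type*} (T : ∀ i, RTree (V i)) (f : (∀ i, V i) → ℝ)

def ancestorVec (c : ∀ i, V i) (p : ι → ℕ) : ∀ i, V i := fun i => (T i).parent^[p i] (c i)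

def TranslationSubmodular : Prop :=
  ∀ (x y : ∀ i, V i) (d : ℕ),
    f (fun i => (T i).up d (x i) (y i)) + f (fun i => (T i).down d (x i) (y i)) ≤ f x + f y

variable {T f}

theorem TranslationSubmodular.ancestorVec_le (hf : TranslationSubmodular T f) (d : ℕ)
    (c : ∀ i, V i) {p q : ι → ℕ} (hp : ∀ i, p i ≤ (T i).depth (c i))
    (hq : ∀ i, q i ≤ (T i).depth (c i)) :
    f (ancestorVec T c fun i => max (p i - d) (q i)) +
        f (ancestorVec T c fun i => min (q i + d) (p i)) ≤
      f (ancestorVec T c p) + f (ancestorVec T c q) := by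
  have := hf (ancestorVec T c p) (ancestorVec T c q) d
  simp only [ancestorVec, (T _).up_iterate_iterate _ d (hp _) (hq _),
    (T _).down_iterate_iterate _ d (hp _) (hq _)] at this
  exact this

theorem TranslationSubmodular.ancestorVec_midpoint_le (hf : TranslationSubmodular T f) (M : ℕ) :
    ∀ (c : ∀ i, V i) (p q : ι → ℕ), (∀ i, q i ≤ p i) → (∀ i, p i ≤ (T i).depth (c i)) →
      (∀ i, p i - q i ≤ M) →
      f (ancestorVec T c fun i => (p i + q i + 1) / 2) +
          f (ancestorVec T c fun i => (p i + q i) / 2) ≤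
        f (ancestorVec T c p) + f (ancestorVec T c q) := by
  induction M using Nat.strong_induction_on with
  | _ M ih =>
  intro c p q hqp hp hgap
  by_cases hM : M ≤ 1
  · have hceil : (fun i => (p i + q i + 1) / 2) = p :=
      funext fun i => by have := hgap i; have := hqp i; omega
    have hfloor : (fun i => (p i + q i) / 2) = q :=
      funext fun i => by have := hgap i; have := hqp i; omega
    rw [hceil, hfloor]
  · set d := (M + 1) / 2 with hd
    set p' : ι → ℕ := fun i => max (p i - d) (q i) with hp'
    set q' : ι → ℕ := fun i => min (q i + d) (p i) with hq'
    have hp'c : ∀ i, p' i ≤ (T i).depth (c i) := fun i => by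
      have := hp i; have := hqp i; simp only [hp']; omega
    have hq'c : ∀ i, q' i ≤ (T i).depth (c i) := fun i => by
      have := hp i; simp only [hq']; omega
    have hmove := hf.ancestorVec_le d c hp (fun i => (hqp i).trans (hp i))
    have hsort := hf.ancestorVec_le 0 c hp'c hq'c
    simp only [Nat.sub_zero, Nat.add_zero] at hsort
    have hsum : ∀ i, max (p' i) (q' i) + min (q' i) (p' i) = p i + q i := fun i => by
      have := hqp i; simp only [hp', hq']; omega
    have hrec := ih d (by omega) c (fun i => max (p' i) (q' i)) (fun i => min (q' i) (p' i))
      (fun i => by omega) (fun i => by have := hp'c i; have := hq'c i; omega)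
      (fun i => by have := hgap i; have := hqp i; simp only [hp', hq']; omega)
    simp only [hsum] at hrec
    exact hrec.trans (hsort.trans hmove)

end Product

theorem translation_submodularity_implies_strong_general {ι : Type*} [Fintype ι] {V : ι → Type*}
    (T : ∀ i, RTree (V i)) (f : (∀ i, V i) → ℝ)
    (h : ∀ (x y : ∀ i, V i) (d : ℕ),
      f (fun i => (T i).up d (x i) (y i)) + f (fun i => (T i).down d (x i) (y i)) ≤
        f x + f y) :
    StronglyTreeSubmodular T f := by
  have hf : TranslationSubmodular T f := h
  intro x y
  choose c p q hqp hp hup hdown hcap hcup using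
    fun i => (T i).exists_chain_up_down_cap_cup (x i) (y i)
  have hmid := hf.ancestorVec_midpoint_le (Finset.univ.sup fun i => p i - q i) c p q hqp hp
    fun i => Finset.le_sup (f := fun i => p i - q i) (Finset.mem_univ i)
  calc f (fun i => (T i).cap (x i) (y i)) + f (fun i => (T i).cup (x i) (y i))
      = f (ancestorVec T c fun i => (p i + q i + 1) / 2) +
          f (ancestorVec T c fun i => (p i + q i) / 2) := by
        simp only [hcap, hcup]
        rfl
    _ ≤ f (ancestorVec T c p) + f (ancestorVec T c q) := hmid
    _ = f (fun i => (T i).up 0 (x i) (y i)) + f (fun i => (T i).down 0 (x i) (y i)) := by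
        simp only [hup, hdown]
        rfl
    _ ≤ f x + f y := hf x y 0

/-- If `f(x) + f(y) ≥ f(x ↑^d y) + f(x ↓_d y)` for all `x, y` and all
integers `d ≥ 0`, then `f` is strongly tree-submodular. -/
theorem translation_submodularity_implies_strong {ι : Type*} [Fintype ι] {V : ι → Type*}
    [∀ i, Fintype (V i)] (T : ∀ i, RTree (V i)) (f : (∀ i, V i) → ℝ)
    (h : ∀ (x y : ∀ i, V i) (d : ℕ),
      f (fun i => (T i).up d (x i) (y i)) + f (fun i => (T i).down d (x i) (y i)) ≤
        f x + f y) :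
    StronglyTreeSubmodular T f :=
  translation_submodularity_implies_strong_general T f h
end

section
/- Let T be the rooted tree with vertex set {0,1,…,K} ∪ {K₋₁, K₊₁}, root 0, parent of k equal to k−1 for k=1,…,K, and parent of both K₋₁ and K₊₁ equal to K. Let D = T₁×…×T_n with each T_i a copy of T, and let D̃ be the product over i∈V of K+1 factors D̃_{i0}=…=D̃_{iK−1}={0,1} and D̃_{iK}={−1,0,+1}, where each factor is viewed as a star tree rooted at 0 (every nonzero label a child of 0) with the induced operations ∧ (highest common ancestor) and ∨. Define ψ:D→D̃ by: if x_i = k ∈ {0,…,K} then (y_{i0},…,y_{iK}) = (1,…,1,0,…,0) with k ones; if x_i = K₋₁ then (y_{i0},…,y_{iK−1},y_{iK}) = (1,…,1,−1); if x_i = K₊₁ then (y_{i0},…,y_{iK−1},y_{iK}) = (1,…,1,+1). Then ψ is injective and preserves the operations ∧ and ∨: ψ(x∧y) = ψ(x)∧ψ(y) and ψ(x∨y) = ψ(x)∨ψ(y) for all x,y∈D; consequently the image of ψ is closed under ∧ and ∨ (it is a signed ring family). -/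
/-- The rooted tree with vertex set `{0,1,…,K} ∪ {K₋₁, K₊₁}` (encoded as `Fin (K+3)`,
with `K₋₁ = K+1` and `K₊₁ = K+2`), root `0`, parent of `k` equal to `k-1` for
`k = 1,…,K`, and parent of both `K₋₁` and `K₊₁` equal to `K`. -/
def figDTree (K : ℕ) : RTree (Fin (K + 3)) where
  root := ⟨0, by omega⟩
  parent v := if v.val ≤ K then ⟨v.val - 1, Nat.lt_of_le_of_lt (Nat.sub_le _ _) v.isLt⟩
    else ⟨K, by omega⟩
  depth v := if v.val ≤ K then v.val else K + 1
  parent_root := by simp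
  depth_root := by simp
  depth_parent v hv := by
    have hv0 : v.val ≠ 0 := fun h => hv (Fin.ext h)
    by_cases h1 : v.val ≤ K
    · simp only [if_pos h1]
      show (if v.val - 1 ≤ K then v.val - 1 else K + 1) + 1 = v.val
      rw [if_pos (by omega : v.val - 1 ≤ K)]
      omega
    · simp only [if_neg h1]
      show (if K ≤ K then K else K + 1) + 1 = K + 1
      rw [if_pos (le_refl K)]

/-- `a ∧ b` on a star tree rooted at `0` (all nonzero labels children of `0`). -/
def swedge (a b : SignType) : SignType := if a = b then a else 0

/-- `a ∨ b` on a star tree rooted at `0`: `a` if `a = b`, and `a + b` (as an element of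
`{-1,0,+1}`) otherwise. -/
noncomputable def svee (a b : SignType) : SignType :=
  if a = b then a else SignType.sign ((a : ℤ) + (b : ℤ))

/-- The map `ψ : D → D̃`, sending `x_i = k ∈ {0,…,K}` to `(1,…,1,0,…,0)` with `k` ones,
`x_i = K₋₁` to `(1,…,1,-1)` and `x_i = K₊₁` to `(1,…,1,+1)`. -/
def psi {ι : Type*} (K : ℕ) (x : ι → Fin (K + 3)) : ι → Fin (K + 1) → SignType :=
  fun i k =>
    if (x i).val ≤ K then (if k.val < (x i).val then 1 else 0)
    else if k.val < K then 1
    else if (x i).val = K + 1 then -1 else 1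

/-! In `figDTree K` the meet of distinct vertices `a ≠ b` is the vertex at height
`min a b K`, and their join is `max a b`, except for the two leaves `K₋₁, K₊₁`, whose join is `K`.
The first `K` coordinates of `ψ` are the threshold indicators `[k < x]`, which turn `min` and
`max` into the coordinatewise `∧` and `∨` of `{0,1}`; the last coordinate records which leaf is
reached, and on the star `{-1,0,+1}` the two leaves meet and join at `0`, the image of `K`. -/

open Classical in
theorem RTree.lca_eq_parent_iterate {V : Type*} (T : RTree V) {a b : V} {k : ℕ}
    (hk : T.anc (T.parent^[k] a) b) (hmin : ∀ n < k, ¬ T.anc (T.parent^[n] a) b) :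
    T.lca a b = T.parent^[k] a := by
  unfold RTree.lca
  rw [(Nat.find_eq_iff _).2 ⟨hk, hmin⟩]

section FigDTree

variable {K : ℕ}

lemma figDTree_depth (v : Fin (K + 3)) :
    (figDTree K).depth v = if v.val ≤ K then v.val else K + 1 := rfl

lemma figDTree_parent_val (v : Fin (K + 3)) :
    ((figDTree K).parent v).val = if v.val ≤ K then v.val - 1 else K := by
  simp only [figDTree]; split_ifs <;> rfl

lemma figDTree_parent_iterate_val (j : ℕ) (v : Fin (K + 3)) :
    ((figDTree K).parent^[j] v).val = if j = 0 then v.val else (figDTree K).depth v - j := by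
  induction j generalizing v with
  | zero => rfl
  | succ j ih =>
    rw [Function.iterate_succ_apply, ih, figDTree_depth, figDTree_depth, figDTree_parent_val,
      if_neg j.succ_ne_zero]
    split_ifs <;> omega

lemma figDTree_anc_iff (u b : Fin (K + 3)) :
    (figDTree K).anc u b ↔ u = b ∨ (u.val ≤ K ∧ u.val ≤ b.val) := by
  constructor
  · rintro ⟨j, rfl⟩
    rw [figDTree_parent_iterate_val, figDTree_depth]
    split_ifs with hj
    · subst hj; exact Or.inl rfl
    all_goals right; omega
  · rintro (rfl | ⟨hu, hub⟩)
    · exact ⟨0, rfl⟩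
    · refine ⟨(figDTree K).depth b - u.val, Fin.ext ?_⟩
      rw [figDTree_parent_iterate_val, figDTree_depth]
      split_ifs <;> omega

lemma figDTree_lca_val (a b : Fin (K + 3)) :
    ((figDTree K).lca a b).val = if a = b then a.val else min (min a.val b.val) K := by
  split_ifs with hab
  · subst hab
    rw [(figDTree K).lca_eq_parent_iterate (k := 0) ⟨0, rfl⟩ (fun n hn => absurd hn n.not_lt_zero)]
    rfl
  · have hne : a.val ≠ b.val := Fin.val_ne_of_ne hab
    rw [(figDTree K).lca_eq_parent_iterate (k := (figDTree K).depth a - min (min a.val b.val) K)]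
    · rw [figDTree_parent_iterate_val, figDTree_depth]
      split_ifs <;> omega
    · rw [figDTree_anc_iff, figDTree_parent_iterate_val, figDTree_depth]
      right
      split_ifs <;> omega
    · intro n hn
      rw [figDTree_anc_iff, Fin.ext_iff, figDTree_parent_iterate_val, figDTree_depth]
      rw [figDTree_depth] at hn
      split_ifs at hn ⊢ <;> omega

lemma figDTree_join_val (a b : Fin (K + 3)) :
    ((figDTree K).join a b).val =
      if K < a.val ∧ K < b.val ∧ a ≠ b then K else max a.val b.val := by
  simp only [RTree.join, RTree.pathVertex, RTree.dist, figDTree_depth, figDTree_lca_val,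
    ne_eq, Fin.ext_iff]
  split_ifs <;> (try simp only [figDTree_parent_iterate_val, figDTree_depth]) <;>
    (try split_ifs) <;> omega

end FigDTree

section PsiBlock

variable {K : ℕ}

/-- `psi K x i` unfolds to `psiBlock K (x i)`. -/
def psiBlock (K : ℕ) (v : Fin (K + 3)) (k : Fin (K + 1)) : SignType :=
  if v.val ≤ K then (if k.val < v.val then 1 else 0)
  else if k.val < K then 1
  else if v.val = K + 1 then -1 else 1

lemma psiBlock_injective : Function.Injective (psiBlock K) := by
  intro a b hab
  by_contra hne
  have hdiff := congrFun hab ⟨min (min a.val b.val) K, by omega⟩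
  simp only [psiBlock, Fin.ext_iff] at hdiff hne
  split_ifs at hdiff <;> omega

lemma psiBlock_meet (a b : Fin (K + 3)) :
    psiBlock K ((figDTree K).meet a b) = fun k => swedge (psiBlock K a k) (psiBlock K b k) := by
  funext k
  simp only [psiBlock, swedge, RTree.meet, figDTree_lca_val, Fin.ext_iff]
  split_ifs <;> first | rfl | omega | simp_all

lemma psiBlock_join (a b : Fin (K + 3)) :
    psiBlock K ((figDTree K).join a b) = fun k => svee (psiBlock K a k) (psiBlock K b k) := by
  funext k
  simp only [psiBlock, svee, figDTree_join_val, ne_eq, Fin.ext_iff]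
  split_ifs <;> first | rfl | omega

end PsiBlock

theorem psi_injective_preserves_wedge_vee_general {ι : Type*} (K : ℕ) :
    Function.Injective (psi (ι := ι) K) ∧
    (∀ x y : ι → Fin (K + 3),
      psi K (fun i => (figDTree K).meet (x i) (y i)) =
        fun i k => swedge (psi K x i k) (psi K y i k)) ∧
    (∀ x y : ι → Fin (K + 3),
      psi K (fun i => (figDTree K).join (x i) (y i)) =
        fun i k => svee (psi K x i k) (psi K y i k)) ∧
    (∀ a ∈ Set.range (psi (ι := ι) K), ∀ b ∈ Set.range (psi (ι := ι) K),
      (fun i k => swedge (a i k) (b i k)) ∈ Set.range (psi (ι := ι) K) ∧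
      (fun i k => svee (a i k) (b i k)) ∈ Set.range (psi (ι := ι) K)) := by
  have hmeet : ∀ x y : ι → Fin (K + 3),
      psi K (fun i => (figDTree K).meet (x i) (y i)) =
        fun i k => swedge (psi K x i k) (psi K y i k) :=
    fun x y => funext fun i => psiBlock_meet (x i) (y i)
  have hjoin : ∀ x y : ι → Fin (K + 3),
      psi K (fun i => (figDTree K).join (x i) (y i)) =
        fun i k => svee (psi K x i k) (psi K y i k) :=
    fun x y => funext fun i => psiBlock_join (x i) (y i)
  refine ⟨fun x y h => funext fun i => psiBlock_injective (congrFun h i), hmeet, hjoin, ?_⟩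
  rintro _ ⟨x, rfl⟩ _ ⟨y, rfl⟩
  exact ⟨⟨_, hmeet x y⟩, ⟨_, hjoin x y⟩⟩

/-- `ψ` is injective and preserves the componentwise operations `∧` and
`∨`; consequently its image is closed under `∧` and `∨` (it is a signed ring family). -/
theorem psi_injective_preserves_wedge_vee {ι : Type*} [Fintype ι] (K : ℕ) :
    Function.Injective (psi (ι := ι) K) ∧
    (∀ x y : ι → Fin (K + 3),
      psi K (fun i => (figDTree K).meet (x i) (y i)) =
        fun i k => swedge (psi K x i k) (psi K y i k)) ∧
    (∀ x y : ι → Fin (K + 3),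
      psi K (fun i => (figDTree K).join (x i) (y i)) =
        fun i k => svee (psi K x i k) (psi K y i k)) ∧
    (∀ a ∈ Set.range (psi (ι := ι) K), ∀ b ∈ Set.range (psi (ι := ι) K),
      (fun i k => swedge (a i k) (b i k)) ∈ Set.range (psi (ι := ι) K) ∧
      (fun i k => svee (a i k) (b i k)) ∈ Set.range (psi (ι := ι) K)) :=
  psi_injective_preserves_wedge_vee_general K
end
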